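/- arXiv:1303.3902 — 4 statements merged into one kernel-verified Lean document; each statement's English description precedes it below -/
import Mathlib

section
/- Let $\alpha$ be irrational and let $n, h$ be positive integers such that the fractional parts $\{n\alpha\}$ and $\{(n+h)\alpha\}$ both lie in an interval $I \subset (0,1)$ of length at most $1/2$. If $\{h\alpha\} < 1/2$ then $\lfloor(n+h)\alpha\rfloor - \lfloor n\alpha\rfloor = \lfloor h\alpha\rfloor$, and if $\{h\alpha\} > 1/2$ then $\lfloor(n+h)\alpha\rfloor - \lfloor n\alpha\rfloor = \lfloor h\alpha\rfloor + 1$. -/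
/-!
Write `x = nα` and `y = hα`. The carry `⌊x + y⌋ - ⌊x⌋ - ⌊y⌋` is `0` or `1`, and it is `1` exactly
when `{x} + {y} ≥ 1`, in which case `{x + y} = {x} + {y} - 1`; otherwise `{x + y} = {x} + {y}`.
Since `{x}` and `{x + y}` lie in an interval of length at most `1/2`, they differ by less than `1/2`.
A carry with `{y} < 1/2` would force `{x} - {x + y} = 1 - {y} > 1/2`, and no carry with `{y} > 1/2`
would force `{x + y} - {x} = {y} > 1/2`.
-/

namespace Int

variable {R : Type*} [CommRing R] [LinearOrder R] [IsStrictOrderedRing R] [FloorRing R]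

theorem floor_add_of_fract_add_fract_lt_one {x y : R} (hxy : fract x + fract y < 1) :
    ⌊x + y⌋ = ⌊x⌋ + ⌊y⌋ := by
  rw [floor_eq_iff]
  push_cast
  constructor <;>
    linarith [floor_add_fract x, floor_add_fract y, fract_nonneg x, fract_nonneg y]

theorem floor_add_of_one_le_fract_add_fract {x y : R} (hxy : 1 ≤ fract x + fract y) :
    ⌊x + y⌋ = ⌊x⌋ + ⌊y⌋ + 1 := by
  rw [floor_eq_iff]
  push_cast
  constructor <;>
    linarith [floor_add_fract x, floor_add_fract y, fract_lt_one x, fract_lt_one y]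

theorem fract_add_of_fract_add_fract_lt_one {x y : R} (hxy : fract x + fract y < 1) :
    fract (x + y) = fract x + fract y := by
  simp only [fract, floor_add_of_fract_add_fract_lt_one hxy]
  push_cast
  ring

theorem fract_add_of_one_le_fract_add_fract {x y : R} (hxy : 1 ≤ fract x + fract y) :
    fract (x + y) = fract x + fract y - 1 := by
  simp only [fract, floor_add_of_one_le_fract_add_fract hxy]
  push_cast
  ring

theorem floor_add_of_fract_sub_fract_add_lt {x y c : R} (hd : fract x - fract (x + y) < c)
    (hy : fract y ≤ 1 - c) : ⌊x + y⌋ = ⌊x⌋ + ⌊y⌋ :=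
  floor_add_of_fract_add_fract_lt_one <| lt_of_not_ge fun hxy => by
    linarith [fract_add_of_one_le_fract_add_fract hxy]

theorem floor_add_of_fract_add_sub_fract_lt {x y c : R} (hd : fract (x + y) - fract x < c)
    (hy : c ≤ fract y) : ⌊x + y⌋ = ⌊x⌋ + ⌊y⌋ + 1 :=
  floor_add_of_one_le_fract_add_fract <| le_of_not_gt fun hxy => by
    linarith [fract_add_of_fract_add_fract_lt_one hxy]

end Int

theorem floor_diff_of_fract_mem_short_interval_general
    {α : ℝ} (n h : ℕ)
    (a b : ℝ) (hlen : b - a ≤ 1/2)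
    (h1 : Int.fract ((n : ℝ) * α) ∈ Set.Ioo a b)
    (h2 : Int.fract (((n : ℝ) + (h : ℝ)) * α) ∈ Set.Ioo a b) :
    (Int.fract ((h : ℝ) * α) < 1/2 →
      ⌊((n : ℝ) + (h : ℝ)) * α⌋ - ⌊(n : ℝ) * α⌋ = ⌊(h : ℝ) * α⌋) ∧
    (Int.fract ((h : ℝ) * α) > 1/2 →
      ⌊((n : ℝ) + (h : ℝ)) * α⌋ - ⌊(n : ℝ) * α⌋ = ⌊(h : ℝ) * α⌋ + 1) := by
  rw [add_mul] at h2 ⊢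
  obtain ⟨ha₁, hb₁⟩ := h1
  obtain ⟨ha₂, hb₂⟩ := h2
  refine ⟨fun hsmall => ?_, fun hlarge => ?_⟩
  · have hfloor := Int.floor_add_of_fract_sub_fract_add_lt (x := n * α) (y := h * α)
      (c := b - a) (by linarith) (by linarith)
    omega
  · have hfloor := Int.floor_add_of_fract_add_sub_fract_lt (x := n * α) (y := h * α)
      (c := b - a) (by linarith) (by linarith)
    omega

/-- If `α` is irrational, `{nα}` and `{(n+h)α}` lie in an interval `I ⊆ (0,1)`
of length at most `1/2`, then `⌊(n+h)α⌋ - ⌊nα⌋` equals `⌊hα⌋` when `{hα} < 1/2`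
and equals `⌊hα⌋ + 1` when `{hα} > 1/2`. -/
theorem floor_diff_of_fract_mem_short_interval
    {α : ℝ} (hα : Irrational α) (n h : ℕ) (hn : 0 < n) (hh : 0 < h)
    (a b : ℝ) (ha : 0 ≤ a) (hb : b ≤ 1) (hlen : b - a ≤ 1/2)
    (h1 : Int.fract ((n : ℝ) * α) ∈ Set.Ioo a b)
    (h2 : Int.fract (((n : ℝ) + (h : ℝ)) * α) ∈ Set.Ioo a b) :
    (Int.fract ((h : ℝ) * α) < 1/2 →
      ⌊((n : ℝ) + (h : ℝ)) * α⌋ - ⌊(n : ℝ) * α⌋ = ⌊(h : ℝ) * α⌋) ∧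
    (Int.fract ((h : ℝ) * α) > 1/2 →
      ⌊((n : ℝ) + (h : ℝ)) * α⌋ - ⌊(n : ℝ) * α⌋ = ⌊(h : ℝ) * α⌋ + 1) :=
  floor_diff_of_fract_mem_short_interval_general n h a b hlen h1 h2
end

section
/- Suppose that for every $\delta > 0$ and $k \in \mathbb{N}$ there exist $c(\delta) > 0$ and $N(\delta) > 0$ such that for any probability space $(X, \mathcal{X}, \mu)$, any commuting measure preserving transformations $T_1, \dots, T_k$, and any set $A$ with $\mu(A) \geq \delta$, there is $0 < n < N(\delta)$ with $\mu(A \cap T_1^{-n}A \cap \dots \cap T_k^{-n}A) > c(\delta)$. Then for every $k \in \mathbb{N}$ and $\delta > 0$ there exists $c'(\delta) > 0$ such that for any irrational $\alpha$, any invertible measure preserving system $(X, \mathcal{X}, \mu, T)$ and any $A$ with $\mu(A) \geq \delta$, one has $\liminf_{N\to\infty} \frac{1}{N}\sum_{n=1}^{N}\mu(A \cap T^{-\lfloor n\alpha\rfloor}A \cap T^{-2\lfloor n\alpha\rfloor}A \cap \dots \cap T^{-k\lfloor n\alpha\rfloor}A) > c'(\delta)$, where $c'(\delta)$ is independent of $\alpha$.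 -/
/-!
If `fract (a α) < 1 / N₀` then `⌊a n α⌋ = n ⌊a α⌋` for every `n < N₀`, so the hypothesis applied
to the commuting maps `T ^ (i ⌊a α⌋)` yields some `0 < n < N₀` for which the `a n`-th term of the
average exceeds `c`. As `a ↦ a n` is at most `N₀`-to-one, a lower density for such `a` becomes a
lower density for the terms exceeding `c`, hence a lower bound for the liminf.

That lower density is at least `1 / (12 N₀)`, whatever the irrational `α`. Take a Dirichlet
approximation `e = q α - p` with `0 < |e| ≤ 1 / (2 N₀)`. Then
`fract ((a + j q) α) = fract (a α + j e)` moves through `[0, 1)` in steps of size `|e|`, so for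
every `a` at least `⌊1 / (N₀ |e|)⌋` of the `j < ⌈2 / |e|⌉` give a point of `[0, 1 / N₀)`; summing
over `a` counts each good integer at most `⌈2 / |e|⌉` times.
-/

open MeasureTheory Filter Finset

lemma Int.floor_natCast_mul_eq_of_mul_fract_lt_one {R : Type*} [Field R] [LinearOrder R]
    [IsStrictOrderedRing R] [FloorRing R] {x : R} {n : ℕ} (h : n * Int.fract x < 1) :
    ⌊(n : R) * x⌋ = n * ⌊x⌋ := by
  have hx : (n : R) * x = ((n * ⌊x⌋ : ℤ) : R) + n * Int.fract x := by
    push_cast [Int.fract]; ring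
  rw [hx, Int.floor_intCast_add, add_eq_left, Int.floor_eq_zero_iff]
  exact ⟨by positivity, h⟩

lemma le_card_range_filter_fract_add_mul_lt_of_pos {t e γ : ℝ} {R J : ℕ} (he : 0 < e)
    (hR : R * e ≤ γ) (hJ : 1 + R * e ≤ J * e) :
    R ≤ #{j ∈ range J | Int.fract (t + (j : ℕ) * e) < γ} := by
  set x := (⌈t⌉ - t) / e
  have hxe : x * e = ⌈t⌉ - t := div_mul_cancel₀ _ he.ne'
  have hx0 : 0 ≤ x := div_nonneg (by linarith [Int.le_ceil t]) he.le
  have hx1 : x * e < 1 := by linarith [Int.ceil_lt_add_one t]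
  have hceil : x ≤ ⌈x⌉₊ ∧ (⌈x⌉₊ : ℝ) < x + 1 := ⟨Nat.le_ceil x, Nat.ceil_lt_add_one hx0⟩
  calc R = #((range R).map (addLeftEmbedding ⌈x⌉₊)) := by simp
    _ ≤ _ := card_le_card fun j hj => ?_
  obtain ⟨i, hi, rfl⟩ := mem_map.1 hj
  have hi : (i : ℝ) + 1 ≤ R := by exact_mod_cast mem_range.1 hi
  have hlo : x * e ≤ ((⌈x⌉₊ + i : ℕ) : ℝ) * e := by push_cast; nlinarith
  have hhi : ((⌈x⌉₊ + i : ℕ) : ℝ) * e < x * e + R * e := by push_cast; nlinarith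
  simp only [addLeftEmbedding_apply, mem_filter, mem_range]
  constructor
  · exact_mod_cast (lt_of_mul_lt_mul_right (by linarith) he.le : ((⌈x⌉₊ + i : ℕ) : ℝ) < J)
  · have hfloor : ⌈t⌉ ≤ ⌊t + ((⌈x⌉₊ + i : ℕ) : ℝ) * e⌋ := Int.le_floor.2 (by linarith)
    rw [Int.fract]
    linarith [(Int.cast_le (R := ℝ)).2 hfloor]

lemma le_card_range_filter_fract_add_mul_lt {t e γ : ℝ} {R J : ℕ} (he : e ≠ 0)
    (hR : R * |e| ≤ γ) (hJ : 1 + R * |e| ≤ J * |e|) :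
    R ≤ #{j ∈ range J | Int.fract (t + (j : ℕ) * e) < γ} := by
  rcases he.lt_or_gt with hneg | hpos
  · rw [abs_of_neg hneg] at hR hJ
    calc R ≤ #{j ∈ range J | Int.fract (t + (J - 1) * e + (j : ℕ) * -e) < γ} :=
          le_card_range_filter_fract_add_mul_lt_of_pos (neg_pos.2 hneg) hR hJ
      _ = #{j ∈ range J | Int.fract (t + (j : ℕ) * e) < γ} := by
        -- reading the window backwards turns the step `e` into `-e`
        rw [card_filter, card_filter, ← sum_range_reflect]
        refine sum_congr rfl fun j hj => ?_
        have hj : j + 1 ≤ J := mem_range.1 hj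
        rw [Nat.cast_sub (by omega), Nat.cast_sub (by omega)]
        ring_nf
  · rw [abs_of_pos hpos] at hR hJ
    exact le_card_range_filter_fract_add_mul_lt_of_pos hpos hR hJ

lemma card_filter_Icc_add_le (P : ℕ → Prop) [DecidablePred P] (N s : ℕ) :
    #{a ∈ Icc 1 N | P (a + s)} ≤ #{a ∈ Icc 1 (N + s) | P a} :=
  card_le_card_of_injOn (· + s)
    (fun a ha => by
      simp only [coe_filter, Set.mem_ofPred_eq, mem_Icc] at ha ⊢
      exact ⟨⟨by omega, by omega⟩, ha.2⟩)
    (fun _ _ _ _ h => Nat.add_right_cancel h)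

lemma mul_le_mul_card_filter_fract_lt {α γ : ℝ} {q R J : ℕ} {p : ℤ}
    (hrun : ∀ t : ℝ, R ≤ #{j ∈ range J | Int.fract (t + (j : ℕ) * (q * α - p)) < γ})
    (N : ℕ) :
    N * R ≤ J * #{a ∈ Icc 1 (N + J * q) | Int.fract ((a : ℕ) * α) < γ} := by
  have hshift (a j : ℕ) : Int.fract (a * α + j * (q * α - p)) =
      Int.fract (((a + j * q : ℕ) : ℝ) * α) := by
    rw [← Int.fract_add_intCast _ (j * p)]
    push_cast
    ring_nf
  calc N * R = ∑ a ∈ Icc 1 N, R := by simp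
    _ ≤ ∑ a ∈ Icc 1 N, #{j ∈ range J | Int.fract (a * α + (j : ℕ) * (q * α - p)) < γ} :=
        sum_le_sum fun a _ => hrun _
    _ = ∑ j ∈ range J, #{a ∈ Icc 1 N | Int.fract (((a + j * q : ℕ) : ℝ) * α) < γ} := by
        simp only [card_filter, hshift]
        exact sum_comm
    _ ≤ ∑ j ∈ range J, #{a ∈ Icc 1 (N + J * q) | Int.fract ((a : ℕ) * α) < γ} := by
        refine sum_le_sum fun j hj => ?_
        have hjq : N + j * q ≤ N + J * q := by have := mem_range.1 hj; gcongr
        exact (card_filter_Icc_add_le (fun b => Int.fract ((b : ℝ) * α) < γ) N (j * q)).trans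
          (card_le_card (filter_subset_filter _ (Icc_subset_Icc_right hjq)))
    _ = J * #{a ∈ Icc 1 (N + J * q) | Int.fract ((a : ℕ) * α) < γ} := by simp

theorem eventually_mul_le_card_filter_fract_lt {α γ : ℝ} (hα : Irrational α) (hγ0 : 0 < γ)
    (hγ1 : γ ≤ 1) :
    ∀ᶠ N : ℕ in atTop, γ / 12 * N ≤ #{a ∈ Icc 1 N | Int.fract ((a : ℕ) * α) < γ} := by
  obtain ⟨q, hq0, -, hq⟩ := Real.exists_nat_abs_mul_sub_round_le α (n := ⌈2 / γ⌉₊)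
    (Nat.ceil_pos.2 (by positivity))
  set e := q * α - round (q * α)
  have he0 : e ≠ 0 := sub_ne_zero.2 ((hα.natCast_mul hq0.ne').ne_int _)
  have he_pos : 0 < |e| := abs_pos.2 he0
  have he : |e| ≤ γ / 2 := by
    refine hq.trans ?_
    rw [div_le_div_iff₀ (by positivity) two_pos, one_mul]
    have := Nat.le_ceil (2 / γ)
    rw [div_le_iff₀ hγ0] at this
    nlinarith
  set R := ⌊γ / |e|⌋₊
  set J := ⌈2 / |e|⌉₊
  have hRe : R * |e| ≤ γ := (le_div_iff₀ he_pos).1 (Nat.floor_le (by positivity))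
  have hJe : 2 ≤ J * |e| := (div_le_iff₀ he_pos).1 (Nat.le_ceil _)
  have hrun (t : ℝ) : R ≤ #{j ∈ range J | Int.fract (t + (j : ℕ) * e) < γ} :=
    le_card_range_filter_fract_add_mul_lt he0 hRe (by linarith)
  have hJR : γ / 6 * J ≤ R := by
    have hR : γ / |e| - 1 < R := Nat.sub_one_lt_floor _
    have hJ : (J : ℝ) < 2 / |e| + 1 := Nat.ceil_lt_add_one (by positivity)
    have : γ / 6 * (2 / |e| + 1) ≤ γ / |e| - 1 := by
      rw [div_add_one he_pos.ne', div_sub_one he_pos.ne', mul_div_assoc',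
        div_le_div_iff_of_pos_right he_pos]
      nlinarith
    nlinarith
  filter_upwards [eventually_ge_atTop (2 * (J * q))] with N hN
  have hcount := mul_le_mul_card_filter_fract_lt hrun (N - J * q)
  rw [Nat.sub_add_cancel (by omega)] at hcount
  have hcount' : ((N - J * q : ℕ) : ℝ) * R ≤
      J * #{a ∈ Icc 1 N | Int.fract ((a : ℕ) * α) < γ} := mod_cast hcount
  have hN' : (N : ℝ) / 2 ≤ ((N - J * q : ℕ) : ℝ) := by
    have : ((2 * (J * q) : ℕ) : ℝ) ≤ N := by exact_mod_cast hN
    push_cast [Nat.cast_sub (show J * q ≤ N by omega)] at this ⊢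
    linarith
  have hJ0 : (0 : ℝ) < J := by nlinarith
  refine le_of_mul_le_mul_left ?_ hJ0
  calc (J : ℝ) * (γ / 12 * N) = N / 2 * (γ / 6 * J) := by ring
    _ ≤ ((N - J * q : ℕ) : ℝ) * R := by gcongr
    _ ≤ _ := hcount'

lemma card_le_mul_card_of_forall_exists_mul_mem {s t : Finset ℕ} {N₀ : ℕ}
    (h : ∀ a ∈ s, ∃ n, 0 < n ∧ n < N₀ ∧ a * n ∈ t) : #s ≤ N₀ * #t := by
  have hcover : s ⊆ (range N₀).biUnion fun n => {a ∈ s | 0 < n ∧ a * n ∈ t} := fun a ha => by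
    obtain ⟨n, hn0, hnN, hnt⟩ := h a ha
    exact mem_biUnion.2 ⟨n, mem_range.2 hnN, mem_filter.2 ⟨ha, hn0, hnt⟩⟩
  have hfibre (n : ℕ) : #{a ∈ s | 0 < n ∧ a * n ∈ t} ≤ #t :=
    card_le_card_of_injOn (· * n) (fun a ha => (mem_filter.1 ha).2.2)
      fun a ha b _ hab => Nat.eq_of_mul_eq_mul_right (mem_filter.1 ha).2.1 hab
  calc #s ≤ ∑ n ∈ range N₀, #{a ∈ s | 0 < n ∧ a * n ∈ t} :=
        (card_le_card hcover).trans card_biUnion_le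
    _ ≤ N₀ * #t := by simpa using sum_le_card_nsmul (range N₀) _ _ fun n _ => hfibre n

lemma eventually_mul_le_card_filter_of_exists_mul {P Q : ℕ → Prop} [DecidablePred P]
    [DecidablePred Q] {ρ : ℝ} {N₀ : ℕ} (hN₀ : 0 < N₀) (hρ : 0 ≤ ρ)
    (hP : ∀ᶠ N in atTop, ρ * N ≤ #{a ∈ Icc 1 N | P a})
    (hPQ : ∀ a, 0 < a → P a → ∃ n, 0 < n ∧ n < N₀ ∧ Q (a * n)) :
    ∀ᶠ N in atTop, ρ / (2 * N₀ ^ 2) * N ≤ #{m ∈ Icc 1 N | Q m} := by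
  filter_upwards [(Nat.tendsto_div_const_atTop hN₀.ne').eventually hP, eventually_ge_atTop N₀]
    with N hPN hN
  have hcard : #{a ∈ Icc 1 (N / N₀) | P a} ≤ N₀ * #{m ∈ Icc 1 N | Q m} := by
    refine card_le_mul_card_of_forall_exists_mul_mem fun a ha => ?_
    obtain ⟨ha, hPa⟩ := mem_filter.1 ha
    obtain ⟨ha1, haN⟩ := mem_Icc.1 ha
    obtain ⟨n, hn0, hnN, hQ⟩ := hPQ a ha1 hPa
    refine ⟨n, hn0, hnN, mem_filter.2 ⟨mem_Icc.2 ⟨Nat.mul_pos ha1 hn0, ?_⟩, hQ⟩⟩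
    calc a * n ≤ N / N₀ * N₀ := Nat.mul_le_mul haN hnN.le
      _ ≤ N := Nat.div_mul_le_self N N₀
  have hdiv : (N : ℝ) ≤ 2 * N₀ * (N / N₀ : ℕ) := by
    have h1 : N < (N / N₀ + 1) * N₀ := by
      rw [add_one_mul]; exact Nat.lt_div_mul_add hN₀
    have h2 : 1 ≤ N / N₀ := (Nat.one_le_div_iff hN₀).2 hN
    exact_mod_cast (show N ≤ 2 * N₀ * (N / N₀) by nlinarith)
  have hN₀' : (0 : ℝ) < N₀ := by exact_mod_cast hN₀
  have hcard' : ((#{a ∈ Icc 1 (N / N₀) | P a} : ℕ) : ℝ) ≤ N₀ * #{m ∈ Icc 1 N | Q m} := by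
    exact_mod_cast hcard
  rw [← div_le_iff₀' hN₀'] at hcard'
  calc ρ / (2 * N₀ ^ 2) * N ≤ ρ / (2 * N₀ ^ 2) * (2 * N₀ * (N / N₀ : ℕ)) := by gcongr
    _ = ρ * (N / N₀ : ℕ) / N₀ := by field_simp
    _ ≤ #{a ∈ Icc 1 (N / N₀) | P a} / N₀ := by gcongr
    _ ≤ _ := hcard'

lemma le_liminf_average_of_eventually_mul_le_card {f : ℕ → ℝ} (hf0 : ∀ n, 0 ≤ f n)
    (hf1 : ∀ n, f n ≤ 1) {c ρ : ℝ} (hc : 0 ≤ c)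
    (h : ∀ᶠ N in atTop, ρ * N ≤ #{n ∈ Icc 1 N | c < f n}) :
    c * ρ ≤ atTop.liminf fun N : ℕ => (N : ℝ)⁻¹ * ∑ n ∈ Icc 1 N, f n := by
  have hbdd : IsBoundedUnder (· ≤ ·) atTop fun N : ℕ => (N : ℝ)⁻¹ * ∑ n ∈ Icc 1 N, f n := by
    refine isBoundedUnder_of ⟨1, fun N => inv_mul_le_one_of_le₀ ?_ (Nat.cast_nonneg N)⟩
    simpa using sum_le_card_nsmul (Icc 1 N) f 1 fun n _ => hf1 n
  refine le_liminf_of_le hbdd.isCoboundedUnder_ge ?_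
  filter_upwards [h, eventually_gt_atTop 0] with N hN hN0
  rw [le_inv_mul_iff₀ (by exact_mod_cast hN0)]
  calc (N : ℝ) * (c * ρ) = c * (ρ * N) := by ring
    _ ≤ c * #{n ∈ Icc 1 N | c < f n} := mul_le_mul_of_nonneg_left hN hc
    _ ≤ ∑ n ∈ Icc 1 N with c < f n, f n := by
        rw [mul_comm, ← nsmul_eq_mul]
        exact card_nsmul_le_sum _ _ _ fun n hn => (mem_filter.1 hn).2.le
    _ ≤ ∑ n ∈ Icc 1 N, f n :=
        sum_le_sum_of_subset_of_nonneg (filter_subset _ _) fun n _ _ => hf0 n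

lemma Equiv.Perm.measurePreserving_zpow {X : Type*} [MeasurableSpace X] {μ : Measure X}
    {T : Equiv.Perm X} (hT : MeasurePreserving T μ μ) (hTs : Measurable T.symm) (z : ℤ) :
    MeasurePreserving ⇑(T ^ z) μ μ := by
  have hTinv : MeasurePreserving ⇑T⁻¹ μ μ :=
    MeasurePreserving.symm (⟨T, hT.measurable, hTs⟩ : X ≃ᵐ X) hT
  induction z using Int.induction_on with
  | zero => exact MeasurePreserving.id μ
  | succ n ih => rw [zpow_add_one, Equiv.Perm.coe_mul]; exact ih.comp hT
  | pred n ih => rw [zpow_sub_one, Equiv.Perm.coe_mul]; exact ih.comp hTinv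

lemma Set.iInter_fin_add_one_eq_biInter_Icc {X : Type*} (k : ℕ) (s : ℕ → Set X) :
    ⋂ i : Fin k, s (i + 1) = ⋂ i ∈ Finset.Icc 1 k, s i := by
  ext x
  simp only [Set.mem_iInter, Finset.mem_Icc]
  refine ⟨fun h i hi => ?_, fun h i => h _ ⟨by omega, by omega⟩⟩
  simpa [Nat.sub_add_cancel hi.1] using h ⟨i - 1, by omega⟩

def UniformMultipleRecurrence (k : ℕ) (δ c : ℝ) (N₀ : ℕ) : Prop :=
  ∀ (X : Type) (_ : MeasurableSpace X) (μ : Measure X), IsProbabilityMeasure μ →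
    ∀ T : Fin k → X → X, (∀ i, MeasurePreserving (T i) μ μ) →
      (∀ i j, (T i) ∘ (T j) = (T j) ∘ (T i)) →
      ∀ A : Set X, MeasurableSet A → δ ≤ (μ A).toReal →
        ∃ n : ℕ, 0 < n ∧ n < N₀ ∧ c < (μ (A ∩ ⋂ i : Fin k, (T i)^[n] ⁻¹' A)).toReal

lemma UniformMultipleRecurrence.exists_zpow_mul {k N₀ : ℕ} {δ c : ℝ}
    (hrec : UniformMultipleRecurrence k δ c N₀) {X : Type} [MeasurableSpace X]
    {μ : Measure X} [IsProbabilityMeasure μ] {T : Equiv.Perm X} (hT : MeasurePreserving T μ μ)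
    (hTs : Measurable T.symm) {A : Set X} (hA : MeasurableSet A) (hAδ : δ ≤ (μ A).toReal)
    (m : ℤ) :
    ∃ n : ℕ, 0 < n ∧ n < N₀ ∧
      c < (μ (A ∩ ⋂ i ∈ Icc 1 k, ⇑(T ^ ((i : ℤ) * (n * m))) ⁻¹' A)).toReal := by
  obtain ⟨n, hn0, hnN, hn⟩ := hrec X _ μ inferInstance
    (fun i : Fin k => ⇑(T ^ (((i : ℕ) + 1 : ℤ) * m)))
    (fun i => Equiv.Perm.measurePreserving_zpow hT hTs _)
    (fun i j => by simp only [← Equiv.Perm.coe_mul, ← zpow_add, add_comm]) A hA hAδ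
  refine ⟨n, hn0, hnN, ?_⟩
  rw [← Set.iInter_fin_add_one_eq_biInter_Icc]
  convert hn using 6 with i
  rw [Equiv.Perm.iterate_eq_pow, ← zpow_natCast, ← zpow_mul]
  push_cast
  ring_nf

/-- Assuming the uniform multidimensional Szemerédi theorem of
Bergelson–Host–McCutcheon–Parreau (for commuting measure preserving
transformations), one gets uniform multiple recurrence along `⌊nα⌋, 2⌊nα⌋, …, k⌊nα⌋`
for any irrational `α`, with a lower bound independent of `α`. -/
theorem uniform_recurrence_along_floor_multiples
    (H : ∀ (k : ℕ), 0 < k → ∀ δ : ℝ, 0 < δ →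
      ∃ c : ℝ, 0 < c ∧ ∃ N₀ : ℕ, 0 < N₀ ∧
        ∀ (X : Type) (_ : MeasurableSpace X) (μ : Measure X), IsProbabilityMeasure μ →
          ∀ T : Fin k → X → X,
            (∀ i, MeasurePreserving (T i) μ μ) →
            (∀ i j, (T i) ∘ (T j) = (T j) ∘ (T i)) →
            ∀ A : Set X, MeasurableSet A → δ ≤ (μ A).toReal →
              ∃ n : ℕ, 0 < n ∧ n < N₀ ∧
                c < (μ (A ∩ ⋂ i : Fin k, (T i)^[n] ⁻¹' A)).toReal) :
    ∀ (k : ℕ), 0 < k → ∀ δ : ℝ, 0 < δ →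
      ∃ c' : ℝ, 0 < c' ∧
        ∀ (α : ℝ), Irrational α →
          ∀ (X : Type) (_ : MeasurableSpace X) (μ : Measure X), IsProbabilityMeasure μ →
            ∀ T : Equiv.Perm X, MeasurePreserving (⇑T) μ μ →
              Measurable (⇑T.symm) →
              ∀ A : Set X, MeasurableSet A → δ ≤ (μ A).toReal →
                c' < atTop.liminf (fun N : ℕ =>
                  (N : ℝ)⁻¹ * ∑ n ∈ Finset.Icc 1 N,
                    (μ (A ∩ ⋂ i ∈ Finset.Icc 1 k,
                      (⇑(T ^ ((i : ℤ) * ⌊(n : ℝ) * α⌋)))⁻¹' A)).toReal) := by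
  intro k hk δ hδ
  obtain ⟨c, hc, N₀, hN₀, hrec⟩ :
      ∃ c : ℝ, 0 < c ∧ ∃ N₀ : ℕ, 0 < N₀ ∧ UniformMultipleRecurrence k δ c N₀ := H k hk δ hδ
  have hN₀' : (0 : ℝ) < N₀ := by exact_mod_cast hN₀
  refine ⟨c / (48 * N₀ ^ 3), by positivity, ?_⟩
  intro α hα X _ μ _ T hT hTs A hA hAδ
  set f : ℕ → ℝ := fun n =>
    (μ (A ∩ ⋂ i ∈ Icc 1 k, ⇑(T ^ ((i : ℤ) * ⌊(n : ℝ) * α⌋)) ⁻¹' A)).toReal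
  show _ < atTop.liminf fun N : ℕ => (N : ℝ)⁻¹ * ∑ n ∈ Icc 1 N, f n
  have hgood (a : ℕ) (_ : 0 < a) (hfract : Int.fract ((a : ℕ) * α) < 1 / N₀) :
      ∃ n, 0 < n ∧ n < N₀ ∧ c < f (a * n) := by
    obtain ⟨n, hn0, hnN, hn⟩ := hrec.exists_zpow_mul hT hTs hA hAδ ⌊(a : ℝ) * α⌋
    refine ⟨n, hn0, hnN, ?_⟩
    have hlt : (n : ℝ) * Int.fract (a * α) < 1 := by
      calc (n : ℝ) * Int.fract (a * α) ≤ N₀ * Int.fract (a * α) := by gcongr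
        _ < N₀ * (1 / N₀) := by gcongr
        _ = 1 := by field_simp
    simp only [f]
    rwa [Nat.cast_mul, mul_comm (a : ℝ), mul_assoc,
      Int.floor_natCast_mul_eq_of_mul_fract_lt_one hlt]
  have hdensity := eventually_mul_le_card_filter_of_exists_mul (Q := fun m => c < f m) hN₀
    (by positivity) (eventually_mul_le_card_filter_fract_lt hα (γ := 1 / N₀) (by positivity)
      (div_le_one_of_le₀ (by exact_mod_cast hN₀) hN₀'.le)) hgood
  calc c / (48 * N₀ ^ 3) < c * (1 / N₀ / 12 / (2 * N₀ ^ 2)) := by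
        field_simp
        linarith [(by positivity : (0 : ℝ) < c * N₀ ^ 3)]
    _ ≤ _ := le_liminf_average_of_eventually_mul_le_card (fun _ => ENNReal.toReal_nonneg)
        (fun _ => measureReal_le_one) hc.le hdensity
end

section
/- For functions $a: \mathbb{Z}/N\mathbb{Z} \to \mathbb{C}$, define $\|a\|_{U^1} = |\mathbb{E}_{n\in\mathbb{Z}_N} a(n)|$ and $\|a\|_{U^{d+1}} = \left(\mathbb{E}_{h\in\mathbb{Z}_N}\|a(\cdot+h)\overline{a(\cdot)}\|_{U^d}^{2^d}\right)^{1/2^{d+1}}$. Then for any $a,b: \mathbb{Z}_N \to \mathbb{C}$ and $d \geq 1$: $\|a+b\|_{U^d} \leq \|a\|_{U^d} + \|b\|_{U^d}$ (the triangle inequality for the Gowers uniformity norm). -/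
open Finset

/-- The Gowers uniformity norm `U^d` on `ℤ/Nℤ`, defined inductively:
`‖a‖_{U^1} = |𝔼_n a(n)|` and
`‖a‖_{U^{d+1}} = (𝔼_h ‖a(·+h)·conj(a)‖_{U^d}^{2^d})^{1/2^{d+1}}`.
(The value at `d = 0` is junk.) -/
noncomputable def gowersNorm (N : ℕ) [NeZero N] : ℕ → (ZMod N → ℂ) → ℝ
  | 0, _ => 0
  | 1, a => ‖(∑ n : ZMod N, a n) / (N : ℂ)‖
  | (d + 2), a =>
      ((∑ h : ZMod N,
        (gowersNorm N (d + 1) (fun n => a (n + h) * (starRingEnd ℂ) (a n))) ^ (2 ^ (d + 1)))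
          / (N : ℝ)) ^ (((2 : ℝ) ^ (d + 2))⁻¹)

/-! The `U^d` norm of `a` is, up to normalisation, the `2^d`-th root of the Gowers inner product
of the constant family `ω ↦ a` indexed by the cube `{0,1}^d`. Cauchy–Schwarz in one coordinate of
the cube, iterated over all coordinates, gives the Gowers–Cauchy–Schwarz inequality
`|⟨f_ω⟩| ≤ ∏_ω ‖f_ω‖_{U^d}`. Expanding the inner product of the constant family `a + b`
multilinearly into `2^(2^d)` terms and bounding each of them in this way gives
`‖a + b‖^(2^d) ≤ (‖a‖ + ‖b‖)^(2^d)`. -/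

open Function

local notation "σ" => starRingEnd ℂ

lemma starRingEnd_pow_succ_apply (k : ℕ) (z : ℂ) : (σ ^ (k + 1)) z = σ ((σ ^ k) z) := by
  rw [pow_succ']; rfl

lemma starRingEnd_pow_apply_conj (k : ℕ) (z : ℂ) : (σ ^ k) (σ z) = σ ((σ ^ k) z) := by
  rw [← starRingEnd_pow_succ_apply, pow_succ]; rfl

@[to_additive]
lemma Fintype.prod_pi_insertNth {α M : Type*} [Fintype α] [CommMonoid M] {d : ℕ} (i : Fin (d + 1))
    (F : (Fin (d + 1) → α) → M) : ∏ Ω, F Ω = ∏ t, ∏ ω, F (i.insertNth t ω) := by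
  rw [← Fintype.prod_prod_type']
  exact (Fintype.prod_equiv (Fin.insertNthEquiv (fun _ => α) i) _ _ fun _ => rfl).symm

theorem pow_two_pow_le_prod_const {X : Type*} {d : ℕ} (F : ((Fin d → Bool) → X) → ℝ)
    (hF₀ : ∀ f, 0 ≤ F f)
    (hF : ∀ f i, F f ^ 2 ≤ F (fun Ω => f (update Ω i false)) * F (fun Ω => f (update Ω i true)))
    (f : (Fin d → Bool) → X) : F f ^ 2 ^ d ≤ ∏ ω, F (fun _ => f ω) := by
  induction d with
  | zero =>
    rw [pow_zero, pow_one, Fintype.prod_unique]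
    exact le_of_eq (congrArg F (funext fun Ω => congrArg f (Subsingleton.elim _ _)))
  | succ d ih =>
    -- families constant along coordinate `0` satisfy the hypothesis in dimension `d`
    set F' : ((Fin d → Bool) → X) → ℝ := fun g => F (fun Ω => g (Fin.tail Ω))
    have hF' : ∀ g i, F' g ^ 2 ≤
        F' (fun ω => g (update ω i false)) * F' (fun ω => g (update ω i true)) := fun g i => by
      simpa only [F', Fin.tail_update_succ] using hF (fun Ω => g (Fin.tail Ω)) i.succ
    have hface : ∀ b, (fun Ω => f (update Ω 0 b)) = fun Ω => f (Fin.cons b (Fin.tail Ω)) :=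
      fun b => funext fun Ω => by rw [← Fin.update_cons_zero (Ω 0), Fin.cons_self_tail]
    calc F f ^ 2 ^ (d + 1) = (F f ^ 2) ^ 2 ^ d := by rw [pow_succ', pow_mul]
      _ ≤ (F' (fun ω => f (Fin.cons false ω)) * F' (fun ω => f (Fin.cons true ω))) ^ 2 ^ d := by
        gcongr
        simpa only [hface] using hF f 0
      _ ≤ (∏ ω, F (fun _ => f (Fin.cons false ω))) * ∏ ω, F (fun _ => f (Fin.cons true ω)) := by
        rw [mul_pow]
        exact mul_le_mul (ih F' (fun _ => hF₀ _) hF' fun ω => f (Fin.cons false ω))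
          (ih F' (fun _ => hF₀ _) hF' fun ω => f (Fin.cons true ω))
          (pow_nonneg (hF₀ _) _) (prod_nonneg fun _ _ => hF₀ _)
      _ = ∏ Ω, F (fun _ => f Ω) := by
        rw [Fintype.prod_pi_insertNth 0, Fintype.prod_bool, mul_comm]
        simp only [Fin.insertNth_zero']

section GowersInner

variable {G : Type*} [AddCommGroup G] {d : ℕ}

def cubeWeight (ω : Fin d → Bool) : ℕ := ∑ i, (ω i).toNat

def cubeDot (ω : Fin d → Bool) (h : Fin d → G) : G := ∑ i, (ω i).toNat • h i

lemma cubeWeight_insertNth (i : Fin (d + 1)) (b : Bool) (ω : Fin d → Bool) :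
    cubeWeight (i.insertNth b ω) = b.toNat + cubeWeight ω := by
  simp [cubeWeight, Fin.sum_univ_succAbove _ i]

lemma cubeDot_insertNth (i : Fin (d + 1)) (b : Bool) (t : G) (ω : Fin d → Bool) (h : Fin d → G) :
    cubeDot (i.insertNth b ω) (i.insertNth t h) = b.toNat • t + cubeDot ω h := by
  simp [cubeDot, Fin.sum_univ_succAbove _ i]

-- `σ ^ cubeWeight ω` conjugates exactly at the vertices `ω` with an odd number of ones.
def gowersIntegrand (f : (Fin d → Bool) → G → ℂ) (x : G) (h : Fin d → G) : ℂ :=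
  ∏ ω, (σ ^ cubeWeight ω) (f ω (x + cubeDot ω h))

lemma gowersIntegrand_insertNth (f : (Fin (d + 1) → Bool) → G → ℂ) (i : Fin (d + 1)) (x t : G)
    (h : Fin d → G) :
    gowersIntegrand f x (i.insertNth t h) =
      gowersIntegrand (fun ω => f (i.insertNth false ω)) x h *
        σ (gowersIntegrand (fun ω => f (i.insertNth true ω)) (x + t) h) := by
  rw [gowersIntegrand, Fintype.prod_pi_insertNth i, Fintype.prod_bool, mul_comm, gowersIntegrand,
    gowersIntegrand, map_prod]
  simp [cubeWeight_insertNth, cubeDot_insertNth, add_comm 1, starRingEnd_pow_succ_apply, add_assoc]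

lemma gowersIntegrand_const_mul_conj (a : G → ℂ) (x t : G) (h : Fin d → G) :
    gowersIntegrand (fun _ => a) x h * σ (gowersIntegrand (fun _ => a) (x + t) h) =
      σ (gowersIntegrand (fun _ => fun n => a (n + t) * σ (a n)) x h) := by
  simp only [gowersIntegrand, map_prod, ← prod_mul_distrib, map_mul, starRingEnd_pow_apply_conj,
    Complex.conj_conj, add_right_comm x t, mul_comm]

variable [Fintype G]

def gowersInner (d : ℕ) (f : (Fin d → Bool) → G → ℂ) : ℂ :=
  ∑ x, ∑ h, gowersIntegrand f x h

lemma gowersInner_eq_sum_mul_conj (f : (Fin (d + 1) → Bool) → G → ℂ) (i : Fin (d + 1)) :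
    gowersInner (d + 1) f = ∑ h, (∑ x, gowersIntegrand (fun ω => f (i.insertNth false ω)) x h) *
      σ (∑ x, gowersIntegrand (fun ω => f (i.insertNth true ω)) x h) := by
  simp only [gowersInner, Fintype.sum_pi_insertNth i, gowersIntegrand_insertNth, map_sum, sum_mul]
  simp only [mul_sum]
  refine (sum_congr rfl fun x _ => ?_).trans sum_comm
  rw [sum_comm]
  exact sum_congr rfl fun h _ => Equiv.sum_comp (Equiv.addLeft x)
    fun y => gowersIntegrand _ x h * σ (gowersIntegrand (fun ω => f (i.insertNth true ω)) y h)

lemma norm_gowersInner_update (f : (Fin (d + 1) → Bool) → G → ℂ) (i : Fin (d + 1)) (b : Bool) :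
    ‖gowersInner (d + 1) (fun Ω => f (update Ω i b))‖ =
      ∑ h, ‖∑ x, gowersIntegrand (fun ω => f (i.insertNth b ω)) x h‖ ^ 2 := by
  simp only [gowersInner_eq_sum_mul_conj _ i, Fin.update_insertNth, Complex.mul_conj,
    Complex.normSq_eq_norm_sq, ← Complex.ofReal_sum, Complex.norm_real, Real.norm_eq_abs]
  exact abs_of_nonneg (sum_nonneg fun _ _ => sq_nonneg _)

lemma norm_gowersInner_sq_le (f : (Fin (d + 1) → Bool) → G → ℂ) (i : Fin (d + 1)) :
    ‖gowersInner (d + 1) f‖ ^ 2 ≤ ‖gowersInner (d + 1) (fun Ω => f (update Ω i false))‖ *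
      ‖gowersInner (d + 1) (fun Ω => f (update Ω i true))‖ := by
  set u := fun h : Fin d → G => ∑ x, gowersIntegrand (fun ω => f (i.insertNth false ω)) x h
  set v := fun h : Fin d → G => ∑ x, gowersIntegrand (fun ω => f (i.insertNth true ω)) x h
  rw [norm_gowersInner_update, norm_gowersInner_update, gowersInner_eq_sum_mul_conj _ i]
  calc ‖∑ h, u h * σ (v h)‖ ^ 2 ≤ (∑ h, ‖u h‖ * ‖v h‖) ^ 2 := by
        gcongr
        refine (norm_sum_le _ _).trans_eq ?_
        simp
    _ ≤ (∑ h, ‖u h‖ ^ 2) * ∑ h, ‖v h‖ ^ 2 := sum_mul_sq_le_sq_mul_sq _ _ _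

theorem norm_gowersInner_pow_le (f : (Fin d → Bool) → G → ℂ) :
    ‖gowersInner d f‖ ^ 2 ^ d ≤ ∏ ω, ‖gowersInner d (fun _ => f ω)‖ := by
  refine pow_two_pow_le_prod_const (fun f => ‖gowersInner d f‖) (fun _ => norm_nonneg _) ?_ f
  rcases d with _ | d
  · exact fun _ i => i.elim0
  · exact norm_gowersInner_sq_le

lemma gowersInner_sum {ι : Type*} [Fintype ι] (g : (Fin d → Bool) → ι → G → ℂ) :
    gowersInner d (fun ω x => ∑ j, g ω j x) =
      ∑ c : (Fin d → Bool) → ι, gowersInner d (fun ω => g ω (c ω)) := by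
  simp only [gowersInner, gowersIntegrand, map_sum, Fintype.prod_sum]
  exact (sum_congr rfl fun _ _ => sum_comm).trans sum_comm

lemma gowersInner_one_const (a : G → ℂ) :
    gowersInner 1 (fun _ => a) = (‖∑ x, a x‖ ^ 2 : ℝ) := by
  rw [gowersInner_eq_sum_mul_conj _ 0, Fintype.sum_unique, Complex.ofReal_pow, ← Complex.mul_conj']
  simp [gowersIntegrand, cubeWeight, cubeDot]

lemma gowersInner_const_succ_succ (a : G → ℂ) :
    gowersInner (d + 2) (fun _ => a) =
      ∑ t, σ (gowersInner (d + 1) (fun _ => fun n => a (n + t) * σ (a n))) := by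
  simp only [gowersInner, Fintype.sum_pi_insertNth 0, gowersIntegrand_insertNth,
    gowersIntegrand_const_mul_conj, map_sum]
  exact sum_comm

end GowersInner

section GowersNorm

variable {N : ℕ} [NeZero N]

lemma gowersNorm_nonneg (d : ℕ) (a : ZMod N → ℂ) : 0 ≤ gowersNorm N d a := by
  match d with
  | 0 => exact le_rfl
  | 1 => exact norm_nonneg _
  | d + 2 => exact Real.rpow_nonneg (div_nonneg (sum_nonneg fun _ _ =>
      (Nat.even_pow.2 ⟨even_two, d.succ_ne_zero⟩).pow_nonneg _) N.cast_nonneg) _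

lemma ofReal_gowersNorm_pow_mul (d : ℕ) (a : ZMod N → ℂ) :
    ((gowersNorm N (d + 1) a ^ 2 ^ (d + 1) * N ^ (d + 2) : ℝ) : ℂ) =
      gowersInner (d + 1) (fun _ => a) := by
  have hN : (N : ℝ) ≠ 0 := Nat.cast_ne_zero.2 (NeZero.ne N)
  induction d generalizing a with
  | zero =>
    rw [gowersInner_one_const, gowersNorm, norm_div, Complex.norm_natCast]
    congr 1
    simp only [zero_add, pow_one, div_pow]
    field_simp
  | succ d ih =>
    rw [gowersInner_const_succ_succ]
    simp_rw [← ih, Complex.conj_ofReal, ← Complex.ofReal_sum]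
    congr 1
    have hX : 0 ≤ (∑ t, gowersNorm N (d + 1) (fun n => a (n + t) * σ (a n)) ^ 2 ^ (d + 1)) / N :=
      div_nonneg (sum_nonneg fun _ _ => pow_nonneg (gowersNorm_nonneg _ _) _) N.cast_nonneg
    have hroot : ∀ {X : ℝ}, 0 ≤ X → ∀ k : ℕ, (X ^ ((2 : ℝ) ^ k)⁻¹) ^ 2 ^ k = X := fun hX k => by
      exact_mod_cast Real.rpow_inv_natCast_pow hX (pow_ne_zero k two_ne_zero)
    rw [gowersNorm, hroot hX, ← sum_mul]
    field_simp
    ring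

lemma norm_gowersInner_const (d : ℕ) (a : ZMod N → ℂ) :
    ‖gowersInner (d + 1) (fun _ => a)‖ = gowersNorm N (d + 1) a ^ 2 ^ (d + 1) * N ^ (d + 2) := by
  rw [← ofReal_gowersNorm_pow_mul, Complex.norm_real, Real.norm_of_nonneg]
  exact mul_nonneg (pow_nonneg (gowersNorm_nonneg _ _) _) (by positivity)

theorem norm_gowersInner_le (d : ℕ) (f : (Fin (d + 1) → Bool) → ZMod N → ℂ) :
    ‖gowersInner (d + 1) f‖ ≤ N ^ (d + 2) * ∏ ω, gowersNorm N (d + 1) (f ω) := by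
  refine le_of_pow_le_pow_left₀ (pow_ne_zero (d + 1) two_ne_zero)
    (mul_nonneg (by positivity) (prod_nonneg fun _ _ => gowersNorm_nonneg _ _)) ?_
  calc ‖gowersInner (d + 1) f‖ ^ 2 ^ (d + 1)
      ≤ ∏ ω, ‖gowersInner (d + 1) (fun _ => f ω)‖ := norm_gowersInner_pow_le f
    _ = (N ^ (d + 2) * ∏ ω, gowersNorm N (d + 1) (f ω)) ^ 2 ^ (d + 1) := by
      simp [norm_gowersInner_const, prod_mul_distrib, prod_pow, mul_pow, mul_comm]

end GowersNorm

/-- Triangle inequality for the Gowers uniformity norms: for all `d ≥ 1`,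
`‖a+b‖_{U^d} ≤ ‖a‖_{U^d} + ‖b‖_{U^d}`. -/
theorem gowersNorm_add_le (N : ℕ) [NeZero N] (a b : ZMod N → ℂ) (d : ℕ) (hd : 1 ≤ d) :
    gowersNorm N d (a + b) ≤ gowersNorm N d a + gowersNorm N d b := by
  obtain ⟨d, rfl⟩ := Nat.exists_eq_add_of_le' hd
  set ν := gowersNorm N (d + 1)
  have hN : (0 : ℝ) < N ^ (d + 2) := pow_pos (Nat.cast_pos.2 (NeZero.pos N)) _
  refine le_of_pow_le_pow_left₀ (pow_ne_zero (d + 1) two_ne_zero)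
    (add_nonneg (gowersNorm_nonneg _ _) (gowersNorm_nonneg _ _)) (le_of_mul_le_mul_right ?_ hN)
  calc ν (a + b) ^ 2 ^ (d + 1) * N ^ (d + 2) = ‖gowersInner (d + 1) (fun _ => a + b)‖ :=
        (norm_gowersInner_const d _).symm
    _ = ‖∑ c : (Fin (d + 1) → Bool) → Bool,
          gowersInner (d + 1) (fun ω => if c ω then a else b)‖ := by
        rw [← gowersInner_sum fun _ (j : Bool) => if j then a else b]
        congr 2
        ext
        simp
    _ ≤ ∑ c : (Fin (d + 1) → Bool) → Bool, N ^ (d + 2) * ∏ ω, ν (if c ω then a else b) :=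
        (norm_sum_le _ _).trans (sum_le_sum fun c _ => norm_gowersInner_le d _)
    _ = (ν a + ν b) ^ 2 ^ (d + 1) * N ^ (d + 2) := by
        rw [← mul_sum, ← Fintype.prod_sum fun _ (j : Bool) => ν (if j then a else b)]
        simp [mul_comm]
end

section
/- Let $(X,\mathcal{X},\mu,T)$ be an invertible measure preserving system, $f_0, f_1 \in L^\infty(\mu)$ bounded by 1, $\alpha$ irrational, and $b: \mathbb{N}\to\mathbb{C}$ a sequence with $b(n)/n^c\to 0$ for all $c>0$. Let $\xi: [0,1)\to[-1,1]$ be supported in an interval $I \subset (0,1)$ of length at most $1/2$. Then $\left\|\frac{1}{N}\sum_{n=1}^{N}b(n)\xi(\{n\alpha\})\, f_0\cdot T^{\lfloor n\alpha\rfloor}f_1\right\|_{L^2(\mu)} \leq C\left(\|b(n)\xi(\{n\alpha\})\mathbf{1}_{[1,N]}\|_{U^2(\mathbb{Z}_{2N})} + o_N(1)\right)$, where $C$ is an absolute constant and the $o_N(1)$ term depends only on $b$. -/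
/-!
Write `a(n) = b(n) ξ({nα}) 1_{[1,N]}(n)` and `u_k = f₁ ∘ T^k ∈ L²(μ)`. As `|f₀| ≤ 1`, the
average is bounded by `N⁻¹ ‖∑ₙ a(n) u_{⌊nα⌋}‖₂`. Expanding the square (van der Corput with
`H = N`) bounds `‖∑ₙ a(n) u_{⌊nα⌋}‖₂²` by `2 ∑_{h ≤ N} |∑ₙ ⟨a(n+h) u_{⌊(n+h)α⌋}, a(n) u_{⌊nα⌋}⟩|`.
When `{nα}` and `{(n+h)α}` both lie in `I`, `⌊(n+h)α⌋ - ⌊nα⌋ = ⌊hα + 1/2⌋` depends on `h` only,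
so by invariance of `μ` the inner product is `γ_h · conj a(n+h) · a(n)` with `|γ_h| ≤ 1`.
What is left, `∑_h |∑ₙ a(n+h) conj a(n)|`, is at most a constant times `N² ‖a‖²_{U²(ℤ_{2N})}`
by Cauchy–Schwarz, since the support `[1, N]` does not wrap around in `ℤ_{2N}`. Hence the bound
holds with `C = 3` and `o_N(1) = 0`.
-/

open Filter MeasureTheory

/-- The Gowers uniformity norm `U^d` on `ℤ/Nℤ`, for functions given on the
representatives `{0,…,N-1}` (addition taken mod `N`). The value at `d = 0` is junk. -/
noncomputable def gowersNormNat (N : ℕ) : ℕ → (ℕ → ℂ) → ℝ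
  | 0, _ => 0
  | 1, a => ‖(∑ n ∈ Finset.range N, a n) / (N : ℂ)‖
  | (d + 2), a =>
      ((∑ h ∈ Finset.range N,
        (gowersNormNat N (d + 1) (fun n => a ((n + h) % N) * (starRingEnd ℂ) (a (n % N))))
          ^ (2 ^ (d + 1))) / (N : ℝ)) ^ (((2 : ℝ) ^ (d + 2))⁻¹)

open scoped InnerProductSpace ComplexConjugate ENNReal

theorem Int.floor_sub_floor_eq_floor_sub_add_half {x y p q : ℝ} (hpq : q - p ≤ 1 / 2)
    (hx : Int.fract x ∈ Set.Ioo p q) (hy : Int.fract y ∈ Set.Ioo p q) :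
    ⌊x⌋ - ⌊y⌋ = ⌊x - y + 1 / 2⌋ := by
  rw [eq_comm, Int.floor_eq_iff]
  have hx' := Int.floor_add_fract x
  have hy' := Int.floor_add_fract y
  push_cast
  constructor <;> linarith [hx.1, hx.2, hy.1, hy.2]

theorem sum_Icc_mul_eq_sum_range_ite_mul {R : Type*} [NonUnitalNonAssocSemiring R] (N : ℕ)
    (c d : ℕ → R) :
    ∑ n ∈ Finset.Icc 1 N, c n * d n =
      ∑ n ∈ Finset.range (N + 1), (if 1 ≤ n ∧ n ≤ N then c n else 0) * d n := by
  simp only [ite_mul, zero_mul, ← Finset.sum_filter]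
  congr 1
  ext n
  simp only [Finset.mem_Icc, Finset.mem_filter, Finset.mem_range]
  omega

theorem sum_sum_le_two_mul_sum_sum_filter_le {ι R : Type*} [LinearOrder ι]
    [AddCommMonoid R] [PartialOrder R] [IsOrderedAddMonoid R]
    (s : Finset ι) (g : ι → ι → R) (hsymm : ∀ m n, g m n = g n m) (hdiag : ∀ n, 0 ≤ g n n) :
    ∑ m ∈ s, ∑ n ∈ s, g m n ≤ 2 • ∑ m ∈ s, ∑ n ∈ s with n ≤ m, g m n := by
  have hupper : ∑ m ∈ s, ∑ n ∈ s with ¬ n ≤ m, g m n = ∑ m ∈ s, ∑ n ∈ s with n < m, g m n := by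
    rw [Finset.sum_comm' (t' := s) (s' := fun m => s.filter (· < m))]
    · simp_rw [hsymm]
    · intro m n; simp only [Finset.mem_filter, not_le]; tauto
  calc ∑ m ∈ s, ∑ n ∈ s, g m n
      = ∑ m ∈ s, ∑ n ∈ s with n ≤ m, g m n + ∑ m ∈ s, ∑ n ∈ s with n < m, g m n := by
        rw [← hupper, ← Finset.sum_add_distrib]
        exact Finset.sum_congr rfl fun m _ => (Finset.sum_filter_add_sum_filter_not _ _ _).symm
    _ ≤ 2 • ∑ m ∈ s, ∑ n ∈ s with n ≤ m, g m n := by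
        rw [two_nsmul]
        gcongr with m hm
        · intro n hn hnm
          simp only [Finset.mem_filter, not_and, not_lt] at hn hnm
          obtain rfl : n = m := le_antisymm hn.2 (hnm hn.1)
          exact hdiag n
        · exact le_of_lt

theorem sum_range_sum_filter_le_eq_sum_range_sum_range_add {R : Type*} [AddCommMonoid R]
    (M : ℕ) (F : ℕ → ℕ → R) (hF : ∀ m n, M ≤ m → F m n = 0) :
    ∑ m ∈ Finset.range M, ∑ n ∈ Finset.range M with n ≤ m, F m n =
      ∑ h ∈ Finset.range M, ∑ n ∈ Finset.range M, F (n + h) n := by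
  rw [Finset.sum_comm, Finset.sum_comm' (s' := fun n => Finset.Ico n M) (t' := Finset.range M)
    fun m n => by simp only [Finset.mem_range, Finset.mem_filter, Finset.mem_Ico]; omega]
  refine Finset.sum_congr rfl fun n _ => ?_
  have hshift := Finset.sum_Ico_eq_sum_range (fun m => F m n) n (n + M)
  rw [add_tsub_cancel_left] at hshift
  rw [← hshift]
  exact Finset.sum_subset (Finset.Ico_subset_Ico_right (by omega)) fun m hm hm' =>
    hF m n (by simp_all)

section InnerProduct

variable {𝕜 E : Type*} [RCLike 𝕜] [NormedAddCommGroup E] [InnerProductSpace 𝕜 E]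

-- Van der Corput with `H = M`: expand the square and fold the pairs `m < n` onto `n < m`.
theorem norm_sum_sq_le_two_mul_sum_norm_sum_inner (M : ℕ) (v : ℕ → E)
    (hv : ∀ n, M ≤ n → v n = 0) :
    ‖∑ n ∈ Finset.range M, v n‖ ^ 2 ≤
      2 * ∑ h ∈ Finset.range M, ‖∑ n ∈ Finset.range M, ⟪v (n + h), v n⟫_𝕜‖ := by
  calc ‖∑ n ∈ Finset.range M, v n‖ ^ 2
      = ∑ m ∈ Finset.range M, ∑ n ∈ Finset.range M, RCLike.re ⟪v m, v n⟫_𝕜 := by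
        rw [← @inner_self_eq_norm_sq 𝕜, sum_inner, map_sum]
        simp_rw [inner_sum, map_sum]
    _ ≤ 2 • ∑ m ∈ Finset.range M, ∑ n ∈ Finset.range M with n ≤ m, RCLike.re ⟪v m, v n⟫_𝕜 :=
        sum_sum_le_two_mul_sum_sum_filter_le _ _ (fun _ _ => inner_re_symm _ _)
          fun n => by rw [@inner_self_eq_norm_sq 𝕜]; positivity
    _ = 2 * RCLike.re (∑ h ∈ Finset.range M, ∑ n ∈ Finset.range M, ⟪v (n + h), v n⟫_𝕜) := by
        rw [sum_range_sum_filter_le_eq_sum_range_sum_range_add M _ fun m n hm => by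
          rw [hv m hm, inner_zero_left, map_zero]]
        simp only [map_sum, nsmul_eq_mul, Nat.cast_ofNat]
    _ ≤ 2 * ∑ h ∈ Finset.range M, ‖∑ n ∈ Finset.range M, ⟪v (n + h), v n⟫_𝕜‖ := by
        gcongr
        exact (RCLike.re_le_norm _).trans (norm_sum_le _ _)

theorem norm_sum_inner_smul_le_norm_sum_mul_conj {ι : Type*} (s : Finset ι) (a a' : ι → 𝕜)
    (w w' : ι → E) {γ : 𝕜} (hγ : ‖γ‖ ≤ 1)
    (hw : ∀ i ∈ s, a' i ≠ 0 → a i ≠ 0 → ⟪w' i, w i⟫_𝕜 = γ) :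
    ‖∑ i ∈ s, ⟪a' i • w' i, a i • w i⟫_𝕜‖ ≤ ‖∑ i ∈ s, a' i * conj (a i)‖ := by
  have hterm : ∀ i ∈ s, ⟪a' i • w' i, a i • w i⟫_𝕜 = conj (a' i * conj (a i)) * γ := by
    intro i hi
    by_cases ha' : a' i = 0
    · simp [ha']
    by_cases ha : a i = 0
    · simp [ha]
    rw [inner_smul_left, inner_smul_right, hw i hi ha' ha, map_mul, RCLike.conj_conj]
    ring
  rw [Finset.sum_congr rfl hterm, ← Finset.sum_mul, ← map_sum, norm_mul, RCLike.norm_conj]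
  exact mul_le_of_le_one_right (norm_nonneg _) hγ

theorem norm_sum_smul_sq_le_of_inner_stationary (u : ℤ → E)
    (hu : ∀ j l, ⟪u j, u l⟫_𝕜 = ⟪u (j - l), u 0⟫_𝕜) (hu_le : ∀ j, ‖u j‖ ≤ 1)
    (M : ℕ) (a : ℕ → 𝕜) (ha : ∀ n, M ≤ n → a n = 0) (k r : ℕ → ℤ)
    (hk : ∀ h n, a (n + h) ≠ 0 → a n ≠ 0 → k (n + h) - k n = r h) :
    ‖∑ n ∈ Finset.range M, a n • u (k n)‖ ^ 2 ≤
      2 * ∑ h ∈ Finset.range M, ‖∑ n ∈ Finset.range M, a (n + h) * conj (a n)‖ := by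
  refine (norm_sum_sq_le_two_mul_sum_norm_sum_inner (𝕜 := 𝕜) M (fun n => a n • u (k n))
    fun n hn => by simp [ha n hn]).trans ?_
  gcongr with h
  refine norm_sum_inner_smul_le_norm_sum_mul_conj _ _ _ _ _ ?_
    fun n _ han' han => by rw [hu, hk h n han' han]
  exact (norm_inner_le_norm _ _).trans (mul_le_one₀ (hu_le _) (norm_nonneg _) (hu_le _))

end InnerProduct

theorem gowersNormNat_nonneg (L d : ℕ) (a : ℕ → ℂ) : 0 ≤ gowersNormNat L d a := by
  match d with
  | 0 => exact le_rfl
  | 1 => exact norm_nonneg _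
  | d + 2 =>
    rw [gowersNormNat]
    exact Real.rpow_nonneg (div_nonneg (Finset.sum_nonneg fun h _ =>
      (Nat.even_pow.mpr ⟨even_two, d.succ_ne_zero⟩).pow_nonneg _) L.cast_nonneg) _

theorem gowersNormNat_two_pow_four (L : ℕ) (a : ℕ → ℂ) :
    gowersNormNat L 2 a ^ 4 =
      (∑ h ∈ Finset.range L, ‖∑ n ∈ Finset.range L, a ((n + h) % L) * conj (a (n % L))‖ ^ 2) /
        (L : ℝ) ^ 3 := by
  have hnonneg : 0 ≤ (∑ h ∈ Finset.range L,
      ‖(∑ n ∈ Finset.range L, a ((n + h) % L) * conj (a (n % L))) / (L : ℂ)‖ ^ 2) / (L : ℝ) :=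
    div_nonneg (Finset.sum_nonneg fun _ _ => sq_nonneg _) L.cast_nonneg
  rw [gowersNormNat]
  simp only [gowersNormNat, zero_add, pow_one]
  rw [← Real.rpow_natCast, ← Real.rpow_mul hnonneg,
    show ((2 : ℝ) ^ 2)⁻¹ * ((4 : ℕ) : ℝ) = 1 by norm_num, Real.rpow_one]
  simp only [norm_div, Complex.norm_natCast]
  rw [Finset.sum_div, Finset.sum_div]
  exact Finset.sum_congr rfl fun h _ => by ring

-- In `ℤ/2N` the correlations of a sequence supported on `[1, N]` see no wrap-around.
theorem sum_range_two_mul_mod_eq_sum_range_succ (N : ℕ) (a : ℕ → ℂ)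
    (ha : ∀ n ∉ Finset.Icc 1 N, a n = 0) {h : ℕ} (hh : h ≤ N) :
    ∑ n ∈ Finset.range (2 * N), a ((n + h) % (2 * N)) * conj (a (n % (2 * N))) =
      ∑ n ∈ Finset.range (N + 1), a (n + h) * conj (a n) := by
  have hsub : ∀ L, N < L → Finset.Icc 1 N ⊆ Finset.range L := fun L hL n hn => by
    simp only [Finset.mem_Icc, Finset.mem_range] at hn ⊢; omega
  rw [← Finset.sum_subset (hsub _ N.lt_succ_self) fun n _ hn => by simp [ha n hn]]
  rcases N.eq_zero_or_pos with rfl | hN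
  · simp
  rw [← Finset.sum_subset (hsub _ (by omega)) fun n hn hn' => by
    rw [Nat.mod_eq_of_lt (Finset.mem_range.mp hn), ha n hn', map_zero, mul_zero]]
  refine Finset.sum_congr rfl fun n hn => ?_
  rw [Finset.mem_Icc] at hn
  rw [Nat.mod_eq_of_lt (by omega : n < 2 * N)]
  rcases lt_or_ge (n + h) (2 * N) with hlt | hge
  · rw [Nat.mod_eq_of_lt hlt]
  · rw [show n + h = 2 * N by omega, Nat.mod_self, ha 0 (by simp), ha (2 * N) (by simp; omega)]

theorem sq_sum_norm_sum_mul_conj_le_gowersNormNat (N : ℕ) (hN : 0 < N) (a : ℕ → ℂ)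
    (ha : ∀ n ∉ Finset.Icc 1 N, a n = 0) :
    (∑ h ∈ Finset.range (N + 1), ‖∑ n ∈ Finset.range (N + 1), a (n + h) * conj (a n)‖) ^ 2 ≤
      (N + 1) * ((2 * N) ^ 3 * gowersNormNat (2 * N) 2 a ^ 4) := by
  refine (sq_sum_le_card_mul_sum_sq ..).trans ?_
  rw [Finset.card_range, Nat.cast_succ, gowersNormNat_two_pow_four, Nat.cast_mul, Nat.cast_ofNat,
    mul_div_cancel₀ _ (by positivity)]
  gcongr
  calc ∑ h ∈ Finset.range (N + 1), ‖∑ n ∈ Finset.range (N + 1), a (n + h) * conj (a n)‖ ^ 2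
      = ∑ h ∈ Finset.range (N + 1), ‖∑ n ∈ Finset.range (2 * N),
          a ((n + h) % (2 * N)) * conj (a (n % (2 * N)))‖ ^ 2 :=
        Finset.sum_congr rfl fun h hh => by
          rw [sum_range_two_mul_mod_eq_sum_range_succ N a ha (Finset.mem_range_succ_iff.mp hh)]
    _ ≤ _ := Finset.sum_le_sum_of_subset_of_nonneg (Finset.range_subset_range.mpr (by omega))
        fun _ _ _ => sq_nonneg _

section Koopman

variable {X : Type*} [MeasurableSpace X] {μ : Measure X}

theorem MeasureTheory.MeasurePreserving.zpow_perm {T : Equiv.Perm X}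
    (hT : MeasurePreserving T μ μ) (hT' : Measurable T.symm) (k : ℤ) :
    MeasurePreserving ⇑(T ^ k) μ μ := by
  have hsymm : MeasurePreserving T.symm μ μ :=
    MeasurePreserving.symm ⟨T, hT.measurable, hT'⟩ hT
  induction k using Int.induction_on with
  | zero => simpa using MeasurePreserving.id μ
  | succ k hk => simpa [zpow_add_one] using hk.comp hT
  | pred k hk => simpa [zpow_sub_one, Equiv.Perm.inv_def] using hk.comp hsymm

theorem toReal_eLpNorm_const_mul_mul_sum_le {ι : Type*} (s : Finset ι) (c₀ : ℂ) {g₀ : X → ℂ}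
    (hg₀ : ∀ x, ‖g₀ x‖ ≤ 1) (c : ι → ℂ) {g : ι → X → ℂ} (hg : ∀ i, MemLp (g i) 2 μ) :
    (eLpNorm (fun x => c₀ * (g₀ x * ∑ i ∈ s, c i * g i x)) 2 μ).toReal ≤
      ‖c₀‖ * ‖∑ i ∈ s, c i • (hg i).toLp (g i)‖ := by
  rw [← norm_smul, Lp.norm_def]
  refine ENNReal.toReal_mono (Lp.eLpNorm_ne_top _) (eLpNorm_mono_ae ?_)
  have hterms : ∀ᵐ x ∂μ, ∀ i ∈ s, (c i • (hg i).toLp (g i)) x = c i * g i x := by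
    refine (Filter.eventually_all_finset s).mpr fun i _ => ?_
    filter_upwards [Lp.coeFn_smul (c i) ((hg i).toLp (g i)), (hg i).coeFn_toLp] with x h1 h2
    rw [h1, Pi.smul_apply, h2, smul_eq_mul]
  filter_upwards [Lp.coeFn_smul c₀ (∑ i ∈ s, c i • (hg i).toLp (g i)),
    Lp.coeFn_fun_finsetSum s fun i => c i • (hg i).toLp (g i), hterms] with x h1 h2 h3
  rw [h1, Pi.smul_apply, h2, Finset.sum_congr rfl h3, smul_eq_mul, norm_mul, norm_mul, norm_mul]
  exact mul_le_mul_of_nonneg_left (mul_le_of_le_one_left (norm_nonneg _) (hg₀ x)) (norm_nonneg _)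

theorem MeasureTheory.MemLp.norm_toLp_le_one {E : Type*} [NormedAddCommGroup E] {p : ℝ≥0∞}
    [IsProbabilityMeasure μ] {f : X → E} (hf : MemLp f p μ) (hf_le : ∀ x, ‖f x‖ ≤ 1) :
    ‖hf.toLp f‖ ≤ 1 := by
  refine (Lp.norm_le_of_ae_bound zero_le_one ?_).trans_eq (by simp [measureUnivNNReal])
  filter_upwards [hf.coeFn_toLp] with x hx
  rw [hx]
  exact hf_le x

variable {𝕜 E : Type*} [RCLike 𝕜] [NormedAddCommGroup E] [InnerProductSpace 𝕜 E]

theorem MeasureTheory.Lp.inner_compMeasurePreserving_comp {φ ψ : X → X}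
    (hφ : MeasurePreserving φ μ μ) (hψ : MeasurePreserving ψ μ μ) (F G : Lp E 2 μ) :
    ⟪Lp.compMeasurePreserving (φ ∘ ψ) (hφ.comp hψ) F, Lp.compMeasurePreserving ψ hψ G⟫_𝕜 =
      ⟪Lp.compMeasurePreserving φ hφ F, G⟫_𝕜 := by
  rw [Lp.compMeasurePreserving_comp_apply]
  exact (Lp.compMeasurePreservingₗᵢ 𝕜 (E := E) (p := 2) ψ hψ).inner_map_map _ _

theorem MeasureTheory.Lp.inner_compMeasurePreserving_zpow {T : Equiv.Perm X}
    (hT : ∀ k : ℤ, MeasurePreserving ⇑(T ^ k) μ μ) (F : Lp E 2 μ) (j l : ℤ) :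
    ⟪Lp.compMeasurePreserving _ (hT j) F, Lp.compMeasurePreserving _ (hT l) F⟫_𝕜 =
      ⟪Lp.compMeasurePreserving _ (hT (j - l)) F, Lp.compMeasurePreserving _ (hT 0) F⟫_𝕜 := by
  have hsplit : ⇑(T ^ j) = ⇑(T ^ (j - l)) ∘ ⇑(T ^ l) := by
    rw [← Equiv.Perm.coe_mul, ← zpow_add, sub_add_cancel]
  have h0 : ⇑(T ^ (0 : ℤ)) = id := by simp
  simp only [hsplit, h0]
  rw [inner_compMeasurePreserving_comp, Lp.compMeasurePreserving_id_apply]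

theorem norm_sum_smul_compMeasurePreserving_zpow_sq_le {T : Equiv.Perm X}
    (hT : ∀ k : ℤ, MeasurePreserving ⇑(T ^ k) μ μ) (F : Lp E 2 μ) (hF : ‖F‖ ≤ 1)
    (M : ℕ) (a : ℕ → 𝕜) (ha : ∀ n, M ≤ n → a n = 0) (k r : ℕ → ℤ)
    (hk : ∀ h n, a (n + h) ≠ 0 → a n ≠ 0 → k (n + h) - k n = r h) :
    ‖∑ n ∈ Finset.range M, a n • Lp.compMeasurePreserving _ (hT (k n)) F‖ ^ 2 ≤
      2 * ∑ h ∈ Finset.range M, ‖∑ n ∈ Finset.range M, a (n + h) * conj (a n)‖ :=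
  norm_sum_smul_sq_le_of_inner_stationary (fun j => Lp.compMeasurePreserving _ (hT j) F)
    (Lp.inner_compMeasurePreserving_zpow hT F)
    (fun j => (Lp.norm_compMeasurePreserving F (hT j)).trans_le hF) M a ha k r hk

end Koopman

theorem le_three_mul_of_sq_le {x s k u N : ℝ} (hN : 1 ≤ N) (hx : 0 ≤ x) (hu : 0 ≤ u)
    (hxs : x ≤ N⁻¹ * s) (hsk : s ^ 2 ≤ 2 * k) (hk : k ^ 2 ≤ (N + 1) * ((2 * N) ^ 3 * u ^ 4)) :
    x ≤ 3 * u := by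
  have hNx : N * x ≤ s := by rwa [le_inv_mul_iff₀ (by linarith)] at hxs
  have h4 : (N * x) ^ 4 ≤ (N * (3 * u)) ^ 4 := by
    calc (N * x) ^ 4 ≤ (s ^ 2) ^ 2 := by nlinarith [pow_le_pow_left₀ (by positivity) hNx 4]
      _ ≤ (2 * k) ^ 2 := pow_le_pow_left₀ (sq_nonneg s) hsk 2
      _ ≤ 4 * ((N + 1) * ((2 * N) ^ 3 * u ^ 4)) := by nlinarith
      _ ≤ (N * (3 * u)) ^ 4 := by
        nlinarith [pow_nonneg hu 4, pow_nonneg (by linarith : (0 : ℝ) ≤ N) 3]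
  have := (pow_le_pow_iff_left₀ (by positivity) (by positivity) (by norm_num)).mp h4
  exact le_of_mul_le_mul_left this (by linarith)

theorem single_average_gowers_control_general {α : ℝ} :
    ∃ C : ℝ, 0 < C ∧
    ∀ b : ℕ → ℂ,
      (∀ c : ℝ, 0 < c →
        Tendsto (fun n : ℕ => ‖b n‖ / (n : ℝ) ^ c) atTop (nhds 0)) →
      ∃ e : ℕ → ℝ, Tendsto e atTop (nhds 0) ∧
        ∀ (X : Type) (_ : MeasurableSpace X) (μ : Measure X), IsProbabilityMeasure μ →
          ∀ T : Equiv.Perm X, MeasurePreserving (⇑T) μ μ → Measurable (⇑T.symm) →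
            ∀ f₀ f₁ : X → ℂ,
              Measurable f₀ → Measurable f₁ →
              (∀ x, ‖f₀ x‖ ≤ 1) → (∀ x, ‖f₁ x‖ ≤ 1) →
              ∀ ξ : ℝ → ℝ, (∀ x, |ξ x| ≤ 1) →
                ∀ p q : ℝ, 0 ≤ p → q ≤ 1 → q - p ≤ 1 / 2 →
                  (∀ x, ξ x ≠ 0 → x ∈ Set.Ioo p q) →
                  ∀ N : ℕ, 0 < N →
                    (eLpNorm (fun x =>
                        ((N : ℂ))⁻¹ * ∑ n ∈ Finset.Icc 1 N,
                          b n * (ξ (Int.fract ((n : ℝ) * α)) : ℂ) *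
                            (f₀ x * f₁ ((T ^ (⌊(n : ℝ) * α⌋ : ℤ)) x))) 2 μ).toReal ≤
                      C * (gowersNormNat (2 * N) 2
                            (fun n => if 1 ≤ n ∧ n ≤ N then
                              b n * (ξ (Int.fract ((n : ℝ) * α)) : ℂ) else 0) + e N) := by
  refine ⟨3, by norm_num, fun b _ => ⟨0, tendsto_const_nhds, ?_⟩⟩
  intro X _ μ _ T hT hT' f₀ f₁ _ hf₁ hf₀_le hf₁_le ξ _ p q _ _ hpq hξ N hN
  set a : ℕ → ℂ := fun n => if 1 ≤ n ∧ n ≤ N then b n * (ξ (Int.fract ((n : ℝ) * α)) : ℂ) else 0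
  have ha : ∀ n ∉ Finset.Icc 1 N, a n = 0 := fun n hn => if_neg (by simpa using hn)
  have hfract : ∀ n, a n ≠ 0 → Int.fract ((n : ℝ) * α) ∈ Set.Ioo p q :=
    fun n hn => hξ _ fun h0 => hn (by simp [a, h0])
  have hTk := MeasurePreserving.zpow_perm hT hT'
  have hf₁2 : MemLp f₁ 2 μ := MemLp.of_bound hf₁.aestronglyMeasurable 1 (ae_of_all _ hf₁_le)
  have hX := toReal_eLpNorm_const_mul_mul_sum_le (Finset.range (N + 1)) (N : ℂ)⁻¹ hf₀_le a
    fun n : ℕ => hf₁2.comp_measurePreserving (hTk ⌊(n : ℝ) * α⌋)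
  have hS := norm_sum_smul_compMeasurePreserving_zpow_sq_le hTk _ (hf₁2.norm_toLp_le_one hf₁_le)
    (N + 1) a (fun n hn => ha n (by simp; omega)) (fun n => ⌊(n : ℝ) * α⌋)
    (fun h => ⌊(h : ℝ) * α + 1 / 2⌋) fun h n h₁ h₂ => by
      rw [Int.floor_sub_floor_eq_floor_sub_add_half hpq (hfract _ h₁) (hfract _ h₂)]
      congr 1
      push_cast
      ring
  have hK := sq_sum_norm_sum_mul_conj_le_gowersNormNat N hN a ha
  rw [Pi.zero_apply, add_zero]
  refine le_three_mul_of_sq_le (by exact_mod_cast hN) ENNReal.toReal_nonneg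
    (gowersNormNat_nonneg _ _ _) ?_ hS hK
  rw [norm_inv, Complex.norm_natCast] at hX
  convert hX using 4 with x
  · rw [sum_Icc_mul_eq_sum_range_ite_mul, Finset.mul_sum _ _ (f₀ x)]
    exact congrArg _ (Finset.sum_congr rfl fun n _ => mul_left_comm _ (f₀ x) _)
  · rfl

/-- The `k = 1` case of the comparison proposition: the `L²(μ)` norm of the
average `N⁻¹ ∑ b(n) ξ({nα}) f₀ · T^{⌊nα⌋}f₁` is bounded by an absolute constant
times `‖b(n)ξ({nα})1_{[1,N]}‖_{U²(ℤ_{2N})} + o_N(1)`, where the `o_N(1)` term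
depends only on `b`, and `ξ` is bounded by `1` and supported in an interval
`I ⊆ (0,1)` of length at most `1/2`. -/
theorem single_average_gowers_control {α : ℝ} (hα : Irrational α) :
    ∃ C : ℝ, 0 < C ∧
    ∀ b : ℕ → ℂ,
      (∀ c : ℝ, 0 < c →
        Tendsto (fun n : ℕ => ‖b n‖ / (n : ℝ) ^ c) atTop (nhds 0)) →
      ∃ e : ℕ → ℝ, Tendsto e atTop (nhds 0) ∧
        ∀ (X : Type) (_ : MeasurableSpace X) (μ : Measure X), IsProbabilityMeasure μ →
          ∀ T : Equiv.Perm X, MeasurePreserving (⇑T) μ μ → Measurable (⇑T.symm) →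
            ∀ f₀ f₁ : X → ℂ,
              Measurable f₀ → Measurable f₁ →
              (∀ x, ‖f₀ x‖ ≤ 1) → (∀ x, ‖f₁ x‖ ≤ 1) →
              ∀ ξ : ℝ → ℝ, (∀ x, |ξ x| ≤ 1) →
                ∀ p q : ℝ, 0 ≤ p → q ≤ 1 → q - p ≤ 1 / 2 →
                  (∀ x, ξ x ≠ 0 → x ∈ Set.Ioo p q) →
                  ∀ N : ℕ, 0 < N →
                    (eLpNorm (fun x =>
                        ((N : ℂ))⁻¹ * ∑ n ∈ Finset.Icc 1 N,
                          b n * (ξ (Int.fract ((n : ℝ) * α)) : ℂ) *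
                            (f₀ x * f₁ ((T ^ (⌊(n : ℝ) * α⌋ : ℤ)) x))) 2 μ).toReal ≤
                      C * (gowersNormNat (2 * N) 2
                            (fun n => if 1 ≤ n ∧ n ≤ N then
                              b n * (ξ (Int.fract ((n : ℝ) * α)) : ℂ) else 0) + e N) :=
  single_average_gowers_control_general
end
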